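/- Let f_0, f_1 be the endomorphisms of F_2 = ⟨x,y⟩ given by f_0(x)=x^5y, f_0(y)=y^5x, f_1(x)=x^2yxyx, f_1(y)=y^2xyxy, and f_u their compositions for u ∈ 2^{<ℕ}. If a ∈ {x^{±1}, y^{±1}} and b, c ∈ {x^{±1}, y^{±1}}, and f_u(a) occurs as a subword of the (freely reduced) word f_u(b)f_u(c), then f_u(a) = f_u(b) or f_u(a) = f_u(c). Consequently, for nontrivial freely reduced α, β ∈ F_2, if f_u(α) is a subword of f_u(β) then α is a subword of β. -/

import Mathlib

/-!
Each of `f₀`, `f₁` replaces every letter by a reduced block of length 6 such that the blocks of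
a reduced word never cancel against each other, and a block occurs in the concatenation of the
blocks of a reduced pair of letters only as one of its two halves (a finite check). For
substitutions with blocks of uniform length these properties force every occurrence of a block in
the image of a reduced word to be aligned with the block boundaries, and from this alignment they
pass to compositions. So every `f_u` has them; this is the second claim, and the first one unless
`c = b⁻¹`. In that case `f_u(b) f_u(c) = W W⁻¹`, and the reduced word `f_u(a)`, of the same length
as `W`, cannot straddle the cancelling middle of `W W⁻¹`.
-/

/-- `x` and `y`, the generators of `F₂ = FreeGroup Bool` (`x = of false`, `y = of true`). -/
def Fx : FreeGroup Bool := FreeGroup.of false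
def Fy : FreeGroup Bool := FreeGroup.of true

/-- `f₀ : x ↦ x⁵y, y ↦ y⁵x`. -/
def F0 : Monoid.End (FreeGroup Bool) :=
  FreeGroup.lift (fun b => if b then Fy ^ 5 * Fx else Fx ^ 5 * Fy)

/-- `f₁ : x ↦ x²yxyx, y ↦ y²xyxy`. -/
def F1 : Monoid.End (FreeGroup Bool) :=
  FreeGroup.lift (fun b => if b then Fy ^ 2 * Fx * Fy * Fx * Fy
    else Fx ^ 2 * Fy * Fx * Fy * Fx)

/-- `f_w` for `w ∈ 2^{<ℕ}`: the composition of the `f_i` along `w`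
(`f_e = id`, `f_{u⌢v} = f_u ∘ f_v`). -/
def Fw (w : List Bool) : Monoid.End (FreeGroup Bool) :=
  (w.map (fun b => if b then F1 else F0)).prod

/-- The image under `f_w` of a single letter `ℓ ∈ {x^{±1}, y^{±1}}`
(a letter is a pair (generator, sign)). -/
def FwLetter (w : List Bool) (ℓ : Bool × Bool) : FreeGroup Bool :=
  Fw w (FreeGroup.mk [ℓ])

/-- A word is cyclically reduced if its first letter is not the inverse of its last. -/
def CyclicallyReduced (g : FreeGroup Bool) : Prop :=
  ∀ p q : Bool × Bool, g.toWord.head? = some p → g.toWord.getLast? = some q →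
    p ≠ (q.1, !q.2)

open FreeGroup List

section ListLemmas

variable {α : Type*}

theorem infix_of_append_eq_append {s X t A Y C : List α} (h : s ++ X ++ t = A ++ Y ++ C)
    (hs : s.length ≤ A.length) (ht : t.length ≤ C.length) : Y <:+: X := by
  obtain ⟨A', rfl⟩ : s <+: A :=
    prefix_of_prefix_length_le ⟨X ++ t, by rw [← append_assoc, h, append_assoc]⟩
      (prefix_append A (Y ++ C)) hs
  obtain ⟨C', rfl⟩ : t <:+ C :=
    suffix_of_suffix_length_le ⟨s ++ X, h⟩ (suffix_append _ C) ht
  simp only [append_assoc] at h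
  have h' : X ++ t = A' ++ Y ++ C' ++ t := by
    simpa only [append_assoc] using append_cancel_left h
  exact ⟨A', C', (append_cancel_right h').symm⟩

theorem isReduced_pair_iff {b c : α × Bool} : IsReduced [b, c] ↔ c ≠ (b.1, !b.2) := by
  obtain ⟨x, s⟩ := b
  obtain ⟨y, t⟩ := c
  cases s <;> cases t <;> simp [isReduced_cons_cons, IsReduced.singleton, eq_comm]

theorem eq_or_eq_invRev_of_append_eq_append_invRev [DecidableEq α]
    {s X t Y : List (α × Bool)} (hX : IsReduced X) (hlen : X.length = Y.length)
    (h : s ++ X ++ t = Y ++ invRev Y) : X = Y ∨ X = invRev Y := by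
  have htotal : s.length + t.length = Y.length := by
    have := congrArg length h
    simp only [length_append, invRev_length, hlen] at this
    omega
  obtain rfl | hs := eq_or_ne s []
  · exact .inl (append_inj (by simpa using h) hlen).1
  obtain rfl | ht := eq_or_ne t []
  · exact .inr (append_inj' (by simpa using h) (by rw [hlen, invRev_length])).2
  exfalso
  have hs := length_pos_iff.mpr hs
  have ht := length_pos_iff.mpr ht
  obtain rfl | ⟨P, z, rfl⟩ := eq_nil_or_concat Y
  · simp only [length_nil] at htotal
    omega
  simp only [concat_eq_append, length_append, length_singleton] at htotal
  have hcancel : [z, (z.1, !z.2)] <:+: X := by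
    refine infix_of_append_eq_append (A := P) (C := invRev P) (h.trans ?_) (by omega)
      (by rw [invRev_length]; omega)
    simp [invRev]
  exact absurd (hX.infix hcancel) (isReduced_pair_iff.not.mpr (not_not.mpr rfl))

end ListLemmas

section BlockMaps

variable {α β γ : Type*} [DecidableEq β]

def letterImage (φ : FreeGroup α →* FreeGroup β) (ℓ : α × Bool) : List (β × Bool) :=
  (φ (mk [ℓ])).toWord

theorem map_mk_eq_mk_flatMap (φ : FreeGroup α →* FreeGroup β) (w : List (α × Bool)) :
    φ (mk w) = mk (w.flatMap (letterImage φ)) := by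
  induction w with
  | nil => simp [← one_eq_mk]
  | cons ℓ w ih =>
    rw [flatMap_cons, ← mul_mk, letterImage, mk_toWord, ← ih, ← φ.map_mul, mul_mk,
      singleton_append]

theorem letterImage_inv (φ : FreeGroup α →* FreeGroup β) (ℓ : α × Bool) :
    letterImage φ (ℓ.1, !ℓ.2) = invRev (letterImage φ ℓ) := by
  have : mk [(ℓ.1, !ℓ.2)] = (mk [ℓ])⁻¹ := by simp [inv_mk, invRev]
  rw [letterImage, letterImage, this, φ.map_inv, toWord_inv]

structure IsRigidBlockMap (φ : FreeGroup α →* FreeGroup β) (M : ℕ) : Prop where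
  pos : 0 < M
  length_letterImage (ℓ : α × Bool) : (letterImage φ ℓ).length = M
  isReduced_append {b c : α × Bool} :
    IsReduced [b, c] → IsReduced (letterImage φ b ++ letterImage φ c)
  rigid {a b c : α × Bool} {s t : List (β × Bool)} : IsReduced [b, c] →
    s ++ letterImage φ a ++ t = letterImage φ b ++ letterImage φ c →
    (s = [] ∧ a = b) ∨ (t = [] ∧ a = c)

namespace IsRigidBlockMap

variable {φ : FreeGroup α →* FreeGroup β} {M : ℕ} (h : IsRigidBlockMap φ M)
include h

theorem letterImage_ne_nil (ℓ : α × Bool) : letterImage φ ℓ ≠ [] :=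
  ne_nil_of_length_pos (h.length_letterImage ℓ ▸ h.pos)

theorem length_flatMap (w : List (α × Bool)) :
    (w.flatMap (letterImage φ)).length = M * w.length := by
  simp [List.length_flatMap, h.length_letterImage, mul_comm]

theorem letterImage_injective : Function.Injective (letterImage φ) := by
  intro a b hab
  have hbb : IsReduced [b, b] := isReduced_cons_cons.mpr ⟨fun _ => rfl, .singleton⟩
  rcases h.rigid (s := []) (t := letterImage φ b) hbb (by rw [hab, nil_append]) with
    ⟨-, hab⟩ | ⟨hnil, -⟩
  · exact hab
  · exact absurd hnil (h.letterImage_ne_nil b)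

theorem isReduced_flatMap :
    ∀ {w : List (α × Bool)}, IsReduced w → IsReduced (w.flatMap (letterImage φ))
  | [], _ => .nil
  | [ℓ], _ => by rw [flatMap_singleton]; exact isReduced_toWord
  | ℓ :: ℓ' :: w, hw => by
    have hpair : IsReduced [ℓ, ℓ'] := hw.infix ⟨[], w, rfl⟩
    have htail : IsReduced (ℓ' :: w) := hw.infix ⟨[ℓ], [], by simp⟩
    simpa only [flatMap_cons, append_assoc] using
      (h.isReduced_append hpair).append_overlap (by simpa using isReduced_flatMap htail)
        (h.letterImage_ne_nil ℓ')

theorem toWord_map_mk {w : List (α × Bool)} (hw : IsReduced w) :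
    (φ (FreeGroup.mk w)).toWord = w.flatMap (letterImage φ) := by
  rw [map_mk_eq_mk_flatMap, toWord_mk, (h.isReduced_flatMap hw).reduce_eq]

theorem exists_of_flatMap_append_eq : ∀ {v w : List (α × Bool)} {t : List (β × Bool)},
    v.flatMap (letterImage φ) ++ t = w.flatMap (letterImage φ) →
    ∃ w₂, w = v ++ w₂ ∧ t = w₂.flatMap (letterImage φ)
  | [], w, t, he => ⟨w, rfl, by simpa using he⟩
  | a :: v, [], t, he => by simp [h.letterImage_ne_nil a] at he
  | a :: v, c :: w, t, he => by
    rw [flatMap_cons, flatMap_cons, append_assoc] at he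
    obtain ⟨hac, he⟩ := append_inj he (by rw [h.length_letterImage, h.length_letterImage])
    obtain ⟨w₂, rfl, rfl⟩ := exists_of_flatMap_append_eq he
    exact ⟨w₂, by rw [h.letterImage_injective hac]; rfl, rfl⟩

theorem exists_of_append_letterImage_append_eq {a : α × Bool} :
    ∀ {w : List (α × Bool)} {s t : List (β × Bool)}, IsReduced w →
    s ++ letterImage φ a ++ t = w.flatMap (letterImage φ) →
    ∃ w₁ w₂, w = w₁ ++ a :: w₂ ∧ s = w₁.flatMap (letterImage φ)
  | [], s, t, _, he => by simp [h.letterImage_ne_nil a] at he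
  | c :: w, s, t, hw, he => by
    rw [flatMap_cons] at he
    by_cases hs : M ≤ s.length
    · obtain ⟨s', rfl⟩ : letterImage φ c <+: s :=
        prefix_of_prefix_length_le (prefix_append _ _) ⟨_, by rw [← append_assoc, he]⟩
          (by rw [h.length_letterImage]; exact hs)
      have hw' : IsReduced w := IsChain.tail hw
      obtain ⟨w₁, w₂, rfl, rfl⟩ := exists_of_append_letterImage_append_eq hw'
        (append_cancel_left (by simpa only [append_assoc] using he))
      exact ⟨c :: w₁, w₂, rfl, rfl⟩
    have hlen := congrArg length he
    simp only [length_append, h.length_letterImage, h.length_flatMap] at hlen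
    rcases w with _ | ⟨c', w⟩
    · obtain rfl : s = [] := length_eq_zero_iff.mp (by simp only [length_nil] at hlen; omega)
      obtain rfl : t = [] := length_eq_zero_iff.mp (by simp only [length_nil] at hlen; omega)
      simp only [nil_append, append_nil, flatMap_nil] at he
      exact ⟨[], [], by rw [h.letterImage_injective he]; rfl, rfl⟩
    · obtain ⟨t', ht'⟩ : s ++ letterImage φ a <+: letterImage φ c ++ letterImage φ c' :=
        prefix_of_prefix_length_le ⟨t, by rw [he]⟩ ⟨w.flatMap (letterImage φ), by simp⟩
          (by simp only [length_append, h.length_letterImage]; omega)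
      rcases h.rigid (hw.infix ⟨[], w, rfl⟩) ht' with ⟨rfl, rfl⟩ | ⟨rfl, -⟩
      · exact ⟨[], c' :: w, rfl, rfl⟩
      · have := congrArg length ht'
        simp only [length_append, h.length_letterImage, length_nil] at this
        omega

theorem exists_of_append_flatMap_append_eq {v w : List (α × Bool)} {s t : List (β × Bool)}
    (hv : v ≠ []) (hw : IsReduced w)
    (he : s ++ v.flatMap (letterImage φ) ++ t = w.flatMap (letterImage φ)) :
    ∃ w₁ w₂, w = w₁ ++ v ++ w₂ ∧ s = w₁.flatMap (letterImage φ) ∧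
      t = w₂.flatMap (letterImage φ) := by
  obtain ⟨a, v, rfl⟩ := exists_cons_of_ne_nil hv
  rw [flatMap_cons, ← append_assoc, append_assoc _ _ t] at he
  obtain ⟨w₁, w₂, rfl, rfl⟩ := h.exists_of_append_letterImage_append_eq hw he
  rw [flatMap_append, flatMap_cons, append_assoc] at he
  obtain ⟨w₂, rfl, rfl⟩ :=
    h.exists_of_flatMap_append_eq (append_cancel_left (append_cancel_left he))
  exact ⟨w₁, w₂, by simp, rfl, rfl⟩

theorem letterImage_eq_or_eq_of_infix {a b c : α × Bool}
    (hsub : letterImage φ a <:+: letterImage φ b ++ letterImage φ c) :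
    letterImage φ a = letterImage φ b ∨ letterImage φ a = letterImage φ c := by
  obtain ⟨s, t, he⟩ := hsub
  by_cases hbc : c = (b.1, !b.2)
  · subst hbc
    rw [letterImage_inv] at he ⊢
    exact eq_or_eq_invRev_of_append_eq_append_invRev isReduced_toWord
      (by rw [h.length_letterImage, h.length_letterImage]) he
  · rcases h.rigid (isReduced_pair_iff.mpr hbc) he with ⟨-, rfl⟩ | ⟨-, rfl⟩
    · exact .inl rfl
    · exact .inr rfl

theorem infix_toWord_of_infix_toWord [DecidableEq α] {x y : FreeGroup α} (hx : x ≠ 1)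
    (hsub : (φ x).toWord <:+: (φ y).toWord) : x.toWord <:+: y.toWord := by
  rw [← mk_toWord (x := x), ← mk_toWord (x := y), h.toWord_map_mk isReduced_toWord,
    h.toWord_map_mk isReduced_toWord] at hsub
  obtain ⟨s, t, he⟩ := hsub
  obtain ⟨w₁, w₂, hw, -, -⟩ := h.exists_of_append_flatMap_append_eq
    (mt toWord_eq_nil_iff.mp hx) isReduced_toWord he
  exact ⟨w₁, w₂, hw.symm⟩

end IsRigidBlockMap

theorem IsRigidBlockMap.id : IsRigidBlockMap (MonoidHom.id (FreeGroup β)) 1 := by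
  have hid (ℓ : β × Bool) : letterImage (MonoidHom.id _) ℓ = [ℓ] := by
    rw [letterImage, MonoidHom.id_apply, toWord_mk, IsReduced.singleton.reduce_eq]
  refine ⟨one_pos, by simp [hid], fun hbc => by simpa [hid] using hbc, fun {a b c s t} _ he => ?_⟩
  rw [hid, hid, hid] at he
  rcases s with _ | ⟨p, _ | ⟨q, s⟩⟩ <;> simp_all

theorem IsRigidBlockMap.letterImage_comp [DecidableEq γ] {ψ : FreeGroup β →* FreeGroup γ}
    {N : ℕ} (hψ : IsRigidBlockMap ψ N) (φ : FreeGroup α →* FreeGroup β) (ℓ : α × Bool) :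
    letterImage (ψ.comp φ) ℓ = (letterImage φ ℓ).flatMap (letterImage ψ) := by
  have := hψ.toWord_map_mk (isReduced_toWord (x := φ (FreeGroup.mk [ℓ])))
  rwa [mk_toWord] at this

theorem IsRigidBlockMap.comp [DecidableEq γ] {ψ : FreeGroup β →* FreeGroup γ}
    {φ : FreeGroup α →* FreeGroup β} {N M : ℕ} (hψ : IsRigidBlockMap ψ N)
    (hφ : IsRigidBlockMap φ M) : IsRigidBlockMap (ψ.comp φ) (N * M) where
  pos := Nat.mul_pos hψ.pos hφ.pos
  length_letterImage ℓ := by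
    rw [hψ.letterImage_comp, hψ.length_flatMap, hφ.length_letterImage]
  isReduced_append hbc := by
    rw [hψ.letterImage_comp, hψ.letterImage_comp, ← flatMap_append]
    exact hψ.isReduced_flatMap (hφ.isReduced_append hbc)
  rigid {a b c s t} hbc he := by
    rw [hψ.letterImage_comp, hψ.letterImage_comp, hψ.letterImage_comp, ← flatMap_append] at he
    obtain ⟨w₁, w₂, hw, rfl, rfl⟩ := hψ.exists_of_append_flatMap_append_eq
      (hφ.letterImage_ne_nil a) (hφ.isReduced_append hbc) he
    rcases hφ.rigid hbc hw.symm with ⟨rfl, rfl⟩ | ⟨rfl, rfl⟩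
    · exact .inl ⟨rfl, rfl⟩
    · exact .inr ⟨rfl, rfl⟩

theorem IsRigidBlockMap.of_forall_fin {φ : FreeGroup α →* FreeGroup β} {M : ℕ} (pos : 0 < M)
    (length_letterImage : ∀ ℓ, (letterImage φ ℓ).length = M)
    (isReduced_append :
      ∀ b c, IsReduced [b, c] → IsReduced (letterImage φ b ++ letterImage φ c))
    (rigid : ∀ a b c, IsReduced [b, c] → ∀ k : Fin (M + 1),
      letterImage φ a = ((letterImage φ b ++ letterImage φ c).drop k).take M →
      (k.val = 0 ∧ a = b) ∨ (k.val = M ∧ a = c)) :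
    IsRigidBlockMap φ M where
  pos := pos
  length_letterImage := length_letterImage
  isReduced_append := isReduced_append _ _
  rigid {a b c s t} hbc he := by
    have hlen := congrArg length he
    simp only [length_append, length_letterImage] at hlen
    have hk : letterImage φ a = ((letterImage φ b ++ letterImage φ c).drop s.length).take M := by
      rw [← he, append_assoc, drop_left, take_left' (length_letterImage a)]
    rcases rigid a b c hbc ⟨s.length, by omega⟩ hk with ⟨hs, rfl⟩ | ⟨hs, rfl⟩
    · exact .inl ⟨length_eq_zero_iff.mp hs, rfl⟩
    · exact .inr ⟨length_eq_zero_iff.mp (by simp only at hs; omega), rfl⟩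

end BlockMaps

instance {α : Type*} [DecidableEq α] : DecidablePred (IsReduced : List (α × Bool) → Prop) :=
  fun L => inferInstanceAs (Decidable (L.IsChain _))

def generatorImage : Bool → Bool → List (Bool × Bool)
  | false, a => replicate 5 (a, true) ++ [(!a, true)]
  | true, a => [(a, true), (a, true), (!a, true), (a, true), (!a, true), (a, true)]

def letterBlock (i : Bool) : Bool × Bool → List (Bool × Bool)
  | (a, true) => generatorImage i a
  | (a, false) => invRev (generatorImage i a)

theorem length_letterBlock : ∀ i ℓ, (letterBlock i ℓ).length = 6 := by decide

theorem isReduced_letterBlock : ∀ i ℓ, IsReduced (letterBlock i ℓ) := by decide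

theorem isReduced_letterBlock_append :
    ∀ i b c, IsReduced [b, c] → IsReduced (letterBlock i b ++ letterBlock i c) := by decide

theorem letterBlock_rigid : ∀ i a b c, IsReduced [b, c] → ∀ k : Fin 7,
    letterBlock i a = ((letterBlock i b ++ letterBlock i c).drop k).take 6 →
    (k.val = 0 ∧ a = b) ∨ (k.val = 6 ∧ a = c) := by decide

theorem map_of_eq_mk_generatorImage (i a : Bool) :
    (if i then F1 else F0) (of a) = mk (generatorImage i a) := by
  cases i <;> cases a <;> refine lift_apply_of.trans ?_ <;>
    simp [Fx, Fy, of, pow_mk, mul_mk, generatorImage]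

theorem letterImage_F01 (i : Bool) : letterImage (if i then F1 else F0) = letterBlock i := by
  funext ⟨a, sign⟩
  have hmk : (if i then F1 else F0) (mk [(a, sign)]) = mk (letterBlock i (a, sign)) := by
    cases sign
    · rw [show mk [(a, false)] = (of a)⁻¹ by simp [of, inv_mk, invRev], _root_.map_inv,
        map_of_eq_mk_generatorImage, inv_mk]
      rfl
    · exact map_of_eq_mk_generatorImage i a
  exact (congrArg toWord hmk).trans (by rw [toWord_mk, (isReduced_letterBlock i _).reduce_eq])

theorem isRigidBlockMap_F01 (i : Bool) : IsRigidBlockMap (if i then F1 else F0) 6 := by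
  refine .of_forall_fin (by norm_num) ?_ ?_ ?_ <;> rw [letterImage_F01]
  exacts [length_letterBlock i, isReduced_letterBlock_append i, letterBlock_rigid i]

theorem isRigidBlockMap_Fw : ∀ u : List Bool, IsRigidBlockMap (Fw u) (6 ^ u.length)
  | [] => IsRigidBlockMap.id
  | i :: u => by
    rw [length_cons, pow_succ']
    exact (isRigidBlockMap_F01 i).comp (isRigidBlockMap_Fw u)

theorem Fw_block_alignment (u : List Bool) :
    (∀ a b c : Bool × Bool,
      (FwLetter u a).toWord <:+: ((FwLetter u b).toWord ++ (FwLetter u c).toWord) →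
      FwLetter u a = FwLetter u b ∨ FwLetter u a = FwLetter u c) ∧
    (∀ α β : FreeGroup Bool, α ≠ 1 →
      (Fw u α).toWord <:+: (Fw u β).toWord → α.toWord <:+: β.toWord) := by
  have hu := isRigidBlockMap_Fw u
  refine ⟨fun a b c hsub => ?_, fun α β hα hsub => hu.infix_toWord_of_infix_toWord hα hsub⟩
  exact (hu.letterImage_eq_or_eq_of_infix hsub).imp (toWord_injective ·) (toWord_injective ·)
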